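/- arXiv:math/0310391 — 2 statements merged into one kernel-verified Lean document; each statement's English description precedes it below -/
import Mathlib

section
/- Let Z be a real random variable with E(Z) = 0, E(Z²) < ∞, such that E(|Z|² 1_{|Z|>z}) = O(z^{-δ}) for some 0 < δ ≤ 1, and if δ = 1 assume additionally E(Z³ 1_{|Z|≤z}) = O(1). Then there exists λ² ≥ 0 such that the characteristic function satisfies E(e^{itZ}) = 1 - (λ²/2) t² (1 + γ(t)) with ∫_{-x}^{x} t² |γ(t)| dt = O(x^{3+δ}) as x → 0. -/
open MeasureTheory

lemma I_cube : Complex.I ^ 3 = -Complex.I := by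
  rw [pow_succ, Complex.I_sq]; ring

lemma taylor4 (u : ℝ) (hu : |u| ≤ 1) :
    ‖Complex.exp (Complex.I * u) - (1 + Complex.I * u - u ^ 2 / 2 - Complex.I * u ^ 3 / 6)‖
      ≤ u ^ 4 := by
  have h := Complex.exp_bound (x := Complex.I * u) (by simpa using hu) (n := 4) (by norm_num)
  have hs : (∑ m ∈ Finset.range 4, (Complex.I * u) ^ m / m.factorial)
      = 1 + Complex.I * u - u ^ 2 / 2 - Complex.I * u ^ 3 / 6 := by
    simp only [Finset.sum_range_succ, Finset.sum_range_zero, Nat.factorial]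
    push_cast
    rw [show (Complex.I * u) ^ 2 = -u^2 by rw [mul_pow, Complex.I_sq]; ring,
        show (Complex.I * u) ^ 3 = -Complex.I * u^3 by rw [mul_pow, I_cube]]
    ring
  rw [hs] at h
  have habs : ‖Complex.I * (u:ℂ)‖ = |u| := by simp
  calc ‖Complex.exp (Complex.I * u) - (1 + Complex.I * u - u ^ 2 / 2 - Complex.I * u ^ 3 / 6)‖
      ≤ |u| ^ 4 * ((4+1 : ℕ) * ((Nat.factorial 4 * 4 : ℝ))⁻¹) := by
        simpa [habs] using h
    _ ≤ u ^ 4 := by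
        rw [show |u| ^ 4 = u ^ 4 by rw [← abs_pow]; exact _root_.abs_of_nonneg (by positivity)]
        norm_num [Nat.factorial]
        nlinarith [pow_nonneg (sq_nonneg u) 2]

lemma taylor2 (u : ℝ) :
    ‖Complex.exp (Complex.I * u) - 1 - Complex.I * u + u ^ 2 / 2‖ ≤ 4 * u ^ 2 := by
  have h3 : ‖(u:ℂ) ^ 2 / 2‖ = u ^ 2 / 2 := by
    rw [norm_div, ← Complex.ofReal_pow, Complex.norm_real]
    simp [_root_.abs_of_nonneg (sq_nonneg u)]
  rcases le_or_gt |u| 1 with hu | hu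
  · have h := Complex.exp_bound (x := Complex.I * u) (by simpa using hu) (n := 2) (by norm_num)
    have hs : (∑ m ∈ Finset.range 2, (Complex.I * u) ^ m / m.factorial)
        = 1 + Complex.I * u := by
      simp [Finset.sum_range_succ, Nat.factorial]
    rw [hs] at h
    have habs : ‖Complex.I * (u:ℂ)‖ = |u| := by simp
    have h2 : ‖Complex.exp (Complex.I * u) - (1 + Complex.I * u)‖ ≤ |u| ^ 2 * (3 * (2*2:ℝ)⁻¹) := by
      simpa [habs, Nat.factorial] using h
    calc ‖Complex.exp (Complex.I * u) - 1 - Complex.I * u + u ^ 2 / 2‖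
        ≤ ‖Complex.exp (Complex.I * u) - (1 + Complex.I * u)‖ + ‖(u:ℂ) ^ 2 / 2‖ := by
          rw [sub_sub]
          exact norm_add_le _ _
      _ ≤ |u| ^ 2 * (3 * (2*2:ℝ)⁻¹) + u ^ 2 / 2 := by rw [h3]; gcongr
      _ ≤ 4 * u ^ 2 := by rw [_root_.sq_abs]; nlinarith [sq_nonneg u]
  · have h1 : ‖Complex.exp (Complex.I * u)‖ = 1 := by
      rw [show Complex.I * u = (u:ℂ) * Complex.I by ring]
      exact Complex.norm_exp_ofReal_mul_I u
    have h2 : ‖Complex.I * (u:ℂ)‖ = |u| := by simp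
    have hu2 : 1 ≤ u ^ 2 := by nlinarith [abs_nonneg u, _root_.sq_abs u]
    have habs : |u| ≤ u ^ 2 := by nlinarith [_root_.sq_abs u, abs_nonneg u]
    calc ‖Complex.exp (Complex.I * u) - 1 - Complex.I * u + u ^ 2 / 2‖
        ≤ ‖Complex.exp (Complex.I * u)‖ + ‖(1:ℂ)‖ + ‖Complex.I * (u:ℂ)‖ + ‖(u:ℂ) ^ 2 / 2‖ := by
          have a := norm_add_le (Complex.exp (Complex.I * u) - 1 - Complex.I * u) ((u:ℂ) ^ 2 / 2)
          have b := norm_sub_le (Complex.exp (Complex.I * u) - 1) (Complex.I * u)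
          have c := norm_sub_le (Complex.exp (Complex.I * u)) (1:ℂ)
          linarith
      _ ≤ 4 * u ^ 2 := by rw [h1, h2, h3]; simp only [norm_one]; linarith
open MeasureTheory

lemma integrable_trunc {Ω : Type*} [MeasurableSpace Ω] (μ : Measure Ω) [IsFiniteMeasure μ]
    (Z : Ω → ℝ) (hZ : Measurable Z) (p : ℝ → Prop) [DecidablePred p] (hp : MeasurableSet {x | p x})
    (F : ℝ → ℝ) (hF : Measurable F) (M : ℝ) (hM0 : 0 ≤ M) (hM : ∀ x, p x → |F x| ≤ M) :
    Integrable (fun ω => if p (Z ω) then F (Z ω) else 0) μ := by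
  refine Integrable.mono' (integrable_const M) ?_ ?_
  · exact (Measurable.ite (hZ hp) (hF.comp hZ) measurable_const).aestronglyMeasurable
  · filter_upwards with ω
    by_cases h : p (Z ω)
    · simpa [h] using hM _ h
    · simpa [h] using hM0

lemma moment_trunc {Ω : Type*} [MeasurableSpace Ω] (μ : Measure Ω) [IsProbabilityMeasure μ]
    (Z : Ω → ℝ) (hZ : Measurable Z) (δ C : ℝ) (hδ0 : 0 < δ)
    (hint2 : Integrable (fun ω => (Z ω)^2) μ)
    (htail : ∀ z : ℝ, 1 ≤ z →
      (∫ ω, (if z < |Z ω| then (Z ω) ^ 2 else 0) ∂μ) ≤ C * z ^ (-δ))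
    (q : ℕ) (hρ : 0 < (q:ℝ) - δ) :
    ∃ A : ℝ, 0 ≤ A ∧ ∀ z : ℝ, 1 ≤ z →
      (∫ ω, (if |Z ω| ≤ z then |Z ω| ^ (q + 2) else 0) ∂μ) ≤ A * z ^ ((q:ℝ) - δ) := by
  set ρ : ℝ := (q:ℝ) - δ with hρdef
  set r : ℝ := (2:ℝ) ^ ρ with hrdef
  have hr0 : 0 < r := Real.rpow_pos_of_pos two_pos ρ
  have hr1 : 1 < r := Real.one_lt_rpow_iff_of_pos two_pos |>.2 (Or.inl ⟨one_lt_two, hρ⟩)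
  have hr1' : (0:ℝ) < r - 1 := by linarith
  refine ⟨1 + |C| * 2 ^ q * r / (r - 1),
    by have : (0:ℝ) ≤ |C| * 2 ^ q * r / (r - 1) := div_nonneg (by positivity) hr1'.le; linarith, ?_⟩
  intro z hz
  have hz0 : 0 < z := lt_of_lt_of_le one_pos hz
  set K : ℕ := ⌈Real.logb 2 z⌉₊ with hKdef
  have hlogb0 : 0 ≤ Real.logb 2 z := Real.logb_nonneg one_lt_two hz
  have hzK : z ≤ (2:ℝ) ^ K := by
    have h1 : z = (2:ℝ) ^ Real.logb 2 z := (Real.rpow_logb two_pos (by norm_num) hz0).symm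
    have h2 : (2:ℝ) ^ Real.logb 2 z ≤ (2:ℝ) ^ (K:ℝ) :=
      Real.rpow_le_rpow_of_exponent_le one_le_two (Nat.le_ceil _)
    rw [Real.rpow_natCast] at h2
    linarith
  have hK2z : ((2:ℝ) ^ K : ℝ) ≤ 2 * z := by
    have h1 : (K:ℝ) ≤ Real.logb 2 z + 1 := le_of_lt (Nat.ceil_lt_add_one hlogb0)
    have h2 : (2:ℝ) ^ (K:ℝ) ≤ (2:ℝ) ^ (Real.logb 2 z + 1) :=
      Real.rpow_le_rpow_of_exponent_le one_le_two h1
    rw [Real.rpow_natCast] at h2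
    rw [Real.rpow_add two_pos, Real.rpow_logb two_pos (by norm_num) hz0, Real.rpow_one] at h2
    linarith
  -- the three families of functions
  set f0 : Ω → ℝ := fun ω => if |Z ω| ≤ 1 then |Z ω| ^ (q + 2) else 0 with hf0
  set fk : ℕ → Ω → ℝ :=
    fun k ω => if (2:ℝ)^k < |Z ω| ∧ |Z ω| ≤ (2:ℝ)^(k+1) then |Z ω| ^ (q + 2) else 0 with hfk
  set fz : Ω → ℝ := fun ω => if |Z ω| ≤ z then |Z ω| ^ (q + 2) else 0 with hfz
  set tl : ℕ → Ω → ℝ := fun k ω => if (2:ℝ)^k < |Z ω| then (Z ω) ^ 2 else 0 with htl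
  have habs : Measurable fun x : ℝ => |x| := continuous_abs.measurable
  have hpow : Measurable fun x : ℝ => |x| ^ (q+2) := (continuous_abs.pow _).measurable
  have hI0 : Integrable f0 μ := by
    refine integrable_trunc μ Z hZ (fun x => |x| ≤ 1)
      (measurableSet_le habs measurable_const) _ hpow 1 zero_le_one ?_
    intro x hx
    rw [abs_of_nonneg (by positivity)]
    exact pow_le_one₀ (abs_nonneg x) hx
  have hIk : ∀ k, Integrable (fk k) μ := by
    intro k
    refine integrable_trunc μ Z hZ (fun x => (2:ℝ)^k < |x| ∧ |x| ≤ (2:ℝ)^(k+1))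
      ((measurableSet_lt measurable_const habs).inter (measurableSet_le habs measurable_const))
      _ hpow (((2:ℝ)^(k+1))^(q+2)) (by positivity) ?_
    · intro x hx
      rw [abs_of_nonneg (by positivity)]
      exact pow_le_pow_left₀ (abs_nonneg x) hx.2 _
  have hIz : Integrable fz μ := by
    refine integrable_trunc μ Z hZ (fun x => |x| ≤ z)
      (measurableSet_le habs measurable_const) _ hpow (z^(q+2)) (by positivity) ?_
    intro x hx
    rw [abs_of_nonneg (by positivity)]
    exact pow_le_pow_left₀ (abs_nonneg x) hx _
  have hItl : ∀ k, Integrable (tl k) μ := by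
    intro k
    refine Integrable.mono' hint2 ?_ ?_
    · exact (Measurable.ite (hZ ((measurableSet_lt measurable_const habs).preimage measurable_id))
        ((hZ.pow_const 2)) measurable_const).aestronglyMeasurable
    · filter_upwards with ω
      by_cases h : (2:ℝ)^k < |Z ω| <;> simp [htl, h, sq_nonneg]
  have hIsum : Integrable (fun ω => ∑ k ∈ Finset.range K, fk k ω) μ :=
    integrable_finset_sum _ (fun k _ => hIk k)
  -- pointwise bound
  have hfknn : ∀ k ω, 0 ≤ fk k ω := by
    intro k ω; simp only [hfk]; split_ifs <;> positivity
  have hpt : ∀ ω, fz ω ≤ f0 ω + ∑ k ∈ Finset.range K, fk k ω := by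
    intro ω
    have hsumnn : 0 ≤ ∑ k ∈ Finset.range K, fk k ω :=
      Finset.sum_nonneg fun k _ => hfknn k ω
    by_cases haz : |Z ω| ≤ z
    · by_cases ha1 : |Z ω| ≤ 1
      · have : fz ω = f0 ω := by simp only [hfz, hf0, if_pos haz, if_pos ha1]
        linarith
      · push_neg at ha1
        have hex : ∃ n, |Z ω| ≤ (2:ℝ)^(n+1) :=
          ⟨K, le_trans (le_trans haz hzK) (pow_le_pow_right₀ one_le_two (Nat.le_succ K))⟩
        have hn1 := Nat.find_spec hex
        have hlow : (2:ℝ) ^ (Nat.find hex) < |Z ω| := by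
          rcases Nat.eq_zero_or_pos (Nat.find hex) with h0 | h0
          · rw [h0]; simpa using ha1
          · obtain ⟨m, hm⟩ := Nat.exists_eq_succ_of_ne_zero h0.ne'
            have := Nat.find_min hex (m := m) (by omega)
            push_neg at this
            rw [hm]; exact this
        have hnK : Nat.find hex < K := by
          by_contra hc
          push_neg at hc
          have h1 : (2:ℝ)^K ≤ 2^(Nat.find hex) := pow_le_pow_right₀ one_le_two hc
          have h2 : |Z ω| ≤ (2:ℝ)^K := le_trans haz hzK
          linarith
        have hterm : fk (Nat.find hex) ω = |Z ω| ^ (q+2) := by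
          simp only [hfk, if_pos (And.intro hlow hn1)]
        have hle : fk (Nat.find hex) ω ≤ ∑ k ∈ Finset.range K, fk k ω :=
          Finset.single_le_sum (fun k _ => hfknn k ω) (Finset.mem_range.2 hnK)
        have hf0nn : 0 ≤ f0 ω := by simp only [hf0]; split_ifs <;> positivity
        have : fz ω = |Z ω| ^ (q+2) := by simp only [hfz, if_pos haz]
        linarith
    · have : fz ω = 0 := by simp only [hfz, if_neg haz]
      have hf0nn : 0 ≤ f0 ω := by simp only [hf0]; split_ifs <;> positivity
      linarith
  -- bound on each block integral
  have hblock : ∀ k, ∫ ω, fk k ω ∂μ ≤ |C| * 2 ^ q * r ^ k := by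
    intro k
    have hpw : ∀ ω, fk k ω ≤ ((2:ℝ)^(k+1))^q * tl k ω := by
      intro ω
      simp only [hfk, htl]
      by_cases h : (2:ℝ)^k < |Z ω| ∧ |Z ω| ≤ (2:ℝ)^(k+1)
      · rw [if_pos h, if_pos h.1, pow_add, _root_.sq_abs]
        exact mul_le_mul_of_nonneg_right (pow_le_pow_left₀ (abs_nonneg _) h.2 _) (sq_nonneg _)
      · rw [if_neg h]
        split_ifs with h2
        · positivity
        · simp
    have h1 : ∫ ω, fk k ω ∂μ ≤ ((2:ℝ)^(k+1))^q * ∫ ω, tl k ω ∂μ := by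
      rw [← integral_const_mul]
      exact integral_mono (hIk k) ((hItl k).const_mul _) hpw
    have h2 : ∫ ω, tl k ω ∂μ ≤ C * ((2:ℝ)^k) ^ (-δ) :=
      htail ((2:ℝ)^k) (one_le_pow₀ one_le_two)
    have h3 : ∫ ω, fk k ω ∂μ ≤ ((2:ℝ)^(k+1))^q * (C * ((2:ℝ)^k) ^ (-δ)) :=
      le_trans h1 (mul_le_mul_of_nonneg_left h2 (by positivity))
    have h4 : ((2:ℝ)^(k+1))^q * (C * ((2:ℝ)^k) ^ (-δ))
        ≤ ((2:ℝ)^(k+1))^q * (|C| * ((2:ℝ)^k) ^ (-δ)) := by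
      have := le_abs_self C
      have hh : (0:ℝ) ≤ ((2:ℝ)^k) ^ (-δ) := Real.rpow_nonneg (by positivity) _
      have := mul_le_mul_of_nonneg_right this hh
      exact mul_le_mul_of_nonneg_left this (by positivity)
    have h5 : ((2:ℝ)^(k+1))^q * (|C| * ((2:ℝ)^k) ^ (-δ)) = |C| * 2 ^ q * r ^ k := by
      have e1 : (((2:ℝ)^(k+1))^q : ℝ) = 2^q * ((2:ℝ)^q)^k := by
        rw [← pow_mul, ← pow_mul, ← pow_add]; ring_nf
      have e2 : (((2:ℝ)^k) ^ (-δ) : ℝ) = ((2:ℝ)^(-δ))^k := by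
        rw [← Real.rpow_natCast (2:ℝ) k, ← Real.rpow_mul (by norm_num),
            mul_comm, Real.rpow_mul (by norm_num), Real.rpow_natCast]
      have e3 : ((2:ℝ)^q : ℝ) * ((2:ℝ)^(-δ)) = r := by
        rw [hrdef, hρdef, ← Real.rpow_natCast (2:ℝ) q, ← Real.rpow_add two_pos, sub_eq_add_neg]
      rw [e1, e2]
      calc 2^q * ((2:ℝ)^q)^k * (|C| * ((2:ℝ)^(-δ))^k)
          = |C| * 2^q * (((2:ℝ)^q) * (2:ℝ)^(-δ))^k := by rw [mul_pow]; ring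
        _ = |C| * 2 ^ q * r ^ k := by rw [e3]
    linarith
  -- assemble
  have hsum : ∑ k ∈ Finset.range K, (|C| * 2 ^ q * r ^ k) ≤ |C| * 2 ^ q * (r ^ K / (r - 1)) := by
    rw [← Finset.mul_sum, geom_sum_eq (ne_of_gt hr1)]
    refine mul_le_mul_of_nonneg_left ?_ (by positivity)
    gcongr
    linarith
  have hrK : r ^ K ≤ r * z ^ ρ := by
    have e1 : r ^ K = ((2:ℝ)^K) ^ ρ := by
      rw [hrdef, ← Real.rpow_natCast ((2:ℝ) ^ ρ) K, ← Real.rpow_mul (by norm_num),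
          mul_comm, Real.rpow_mul (by norm_num), Real.rpow_natCast]
    have e2 : ((2:ℝ)^K) ^ ρ ≤ (2 * z) ^ ρ :=
      Real.rpow_le_rpow (by positivity) hK2z (le_of_lt hρ)
    have e3 : ((2:ℝ) * z) ^ ρ = r * z ^ ρ := by
      rw [Real.mul_rpow (by norm_num) hz0.le, hrdef]
    linarith [e1 ▸ e2.trans_eq e3]
  have h1z : (1:ℝ) ≤ z ^ ρ := by
    have := Real.rpow_le_rpow_of_exponent_le hz (le_of_lt hρ : (0:ℝ) ≤ ρ)
    rwa [Real.rpow_zero] at this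
  have hf0le : ∫ ω, f0 ω ∂μ ≤ 1 := by
    calc ∫ ω, f0 ω ∂μ ≤ ∫ _, (1:ℝ) ∂μ := by
          refine integral_mono hI0 (integrable_const 1) (fun ω => ?_)
          simp only [hf0]
          split_ifs with h
          · exact pow_le_one₀ (abs_nonneg _) h
          · norm_num
      _ = 1 := by simp
  have hmain : ∫ ω, fz ω ∂μ ≤ 1 + |C| * 2 ^ q * (r ^ K / (r - 1)) := by
    calc ∫ ω, fz ω ∂μ ≤ ∫ ω, (f0 ω + ∑ k ∈ Finset.range K, fk k ω) ∂μ :=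
          integral_mono hIz (hI0.add hIsum) hpt
      _ = ∫ ω, f0 ω ∂μ + ∫ ω, (∑ k ∈ Finset.range K, fk k ω) ∂μ := integral_add hI0 hIsum
      _ = ∫ ω, f0 ω ∂μ + ∑ k ∈ Finset.range K, ∫ ω, fk k ω ∂μ := by
          rw [integral_finset_sum _ (fun k _ => hIk k)]
      _ ≤ 1 + ∑ k ∈ Finset.range K, (|C| * 2 ^ q * r ^ k) :=
          add_le_add hf0le (Finset.sum_le_sum (fun k _ => hblock k))
      _ ≤ 1 + |C| * 2 ^ q * (r ^ K / (r - 1)) := by linarith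
  have hfinal : 1 + |C| * 2 ^ q * (r ^ K / (r - 1))
      ≤ (1 + |C| * 2 ^ q * r / (r - 1)) * z ^ ρ := by
    have hB : (0:ℝ) ≤ |C| * 2 ^ q / (r - 1) := div_nonneg (by positivity) hr1'.le
    have h2 : |C| * 2 ^ q * (r ^ K / (r - 1)) ≤ |C| * 2 ^ q / (r - 1) * (r * z ^ ρ) := by
      rw [div_mul_eq_mul_div, mul_div_assoc]
      exact mul_le_mul_of_nonneg_left (by gcongr) (by positivity)
    have h3 : (1 + |C| * 2 ^ q * r / (r - 1)) * z ^ ρ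
        = z ^ ρ + |C| * 2 ^ q / (r - 1) * (r * z ^ ρ) := by ring
    nlinarith [mul_nonneg hB (mul_nonneg hr0.le (le_trans zero_le_one h1z))]
  calc ∫ ω, fz ω ∂μ ≤ 1 + |C| * 2 ^ q * (r ^ K / (r - 1)) := hmain
    _ ≤ (1 + |C| * 2 ^ q * r / (r - 1)) * z ^ ρ := hfinal

set_option maxHeartbeats 1000000 in
/-- Expansion of the characteristic function under truncated moment conditions. -/
theorem stmt_11 {Ω : Type*} [MeasurableSpace Ω] (μ : Measure Ω) [IsProbabilityMeasure μ]
    (Z : Ω → ℝ) (hZ : Measurable Z) (δ : ℝ) (hδ0 : 0 < δ) (hδ1 : δ ≤ 1)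
    (hL2 : MemLp Z 2 μ) (hmean : ∫ ω, Z ω ∂μ = 0)
    (htail : ∃ C : ℝ, ∀ z : ℝ, 1 ≤ z →
      (∫ ω, (if z < |Z ω| then (Z ω) ^ 2 else 0) ∂μ) ≤ C * z ^ (-δ))
    (hthird : δ = 1 → ∃ C : ℝ, ∀ z : ℝ, 1 ≤ z →
      |∫ ω, (if |Z ω| ≤ z then (Z ω) ^ 3 else 0) ∂μ| ≤ C) :
    ∃ lamsq : ℝ, 0 ≤ lamsq ∧ ∃ g : ℝ → ℂ,
      (∀ t : ℝ, (∫ ω, Complex.exp (Complex.I * t * Z ω) ∂μ)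
        = 1 - (lamsq / 2 : ℂ) * (t : ℂ) ^ 2 * (1 + g t)) ∧
      ∃ C > 0, ∃ x₀ > 0, ∀ x : ℝ, 0 < x → x ≤ x₀ →
        (∫ t in (-x)..x, t ^ 2 * ‖g t‖) ≤ C * x ^ (3 + δ) := by
  classical
  obtain ⟨C, hC⟩ := htail
  have hint2 : Integrable (fun ω => (Z ω)^2) μ := hL2.integrable_sq
  have hint1 : Integrable Z μ := hL2.integrable one_le_two
  have habsm : Measurable fun x : ℝ => |x| := continuous_abs.measurable
  set σ2 : ℝ := ∫ ω, (Z ω)^2 ∂μ with hσ2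
  have hσ2nn : 0 ≤ σ2 := integral_nonneg (fun ω => sq_nonneg _)
  set φ : ℝ → ℂ := fun t => ∫ ω, Complex.exp (Complex.I * t * Z ω) ∂μ with hφ
  have hnexp : ∀ (t : ℝ) (ω : Ω), ‖Complex.exp (Complex.I * t * Z ω)‖ = 1 := by
    intro t ω
    rw [show Complex.I * t * Z ω = ((t * Z ω : ℝ) : ℂ) * Complex.I by push_cast; ring]
    exact Complex.norm_exp_ofReal_mul_I _
  have hexpmeas : ∀ t : ℝ, Measurable (fun ω => Complex.exp (Complex.I * t * Z ω)) := by
    intro t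
    exact Complex.measurable_exp.comp
      ((measurable_const.mul (Complex.measurable_ofReal.comp hZ)))
  have hφint : ∀ t : ℝ, Integrable (fun ω => Complex.exp (Complex.I * t * Z ω)) μ := by
    intro t
    refine Integrable.mono' (integrable_const 1) (hexpmeas t).aestronglyMeasurable ?_
    filter_upwards with ω
    rw [hnexp t ω]
  have hφ0 : φ 0 = 1 := by
    simp only [hφ, Complex.ofReal_zero, mul_zero, zero_mul, Complex.exp_zero]
    simp
  have hφcont : Continuous φ := by
    refine continuous_of_dominated (fun t => (hexpmeas t).aestronglyMeasurable)
      (fun t => Filter.Eventually.of_forall (fun ω => (hnexp t ω).le)) (integrable_const 1) ?_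
    filter_upwards with ω
    exact Complex.continuous_exp.comp
      ((continuous_const.mul Complex.continuous_ofReal).mul continuous_const)
  rcases eq_or_lt_of_le hσ2nn with hzero | hpos
  · -- degenerate case : Z = 0 a.e.
    have hZ0 : ∀ᵐ ω ∂μ, Z ω = 0 := by
      have h := (integral_eq_zero_iff_of_nonneg (fun ω => sq_nonneg (Z ω)) hint2).1 hzero.symm
      filter_upwards [h] with ω hω
      exact pow_eq_zero_iff (two_ne_zero) |>.1 hω
    refine ⟨0, le_refl 0, fun _ => 0, ?_, 1, one_pos, 1, one_pos, ?_⟩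
    · intro t
      have : (∫ ω, Complex.exp (Complex.I * t * Z ω) ∂μ) = ∫ _, (1:ℂ) ∂μ := by
        refine integral_congr_ae ?_
        filter_upwards [hZ0] with ω hω
        rw [hω]
        simp
      rw [this]
      simp
    · intro x hx _
      have : (∫ t in (-x)..x, t ^ 2 * ‖(0:ℂ)‖) = 0 := by simp
      rw [this]
      have : (0:ℝ) < x ^ (3 + δ) := Real.rpow_pos_of_pos hx _
      linarith
  · -- main case
    have hσ2pos : 0 < σ2 := hpos
    -- quartic truncated moment bound
    obtain ⟨A4, hA4nn, hA4⟩ := moment_trunc μ Z hZ δ C hδ0 hint2 hC 2 (by push_cast; linarith)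
    -- cubic bound
    have hcub : ∃ B : ℝ, 0 ≤ B ∧ ∀ z : ℝ, 1 ≤ z →
        |∫ ω, (if |Z ω| ≤ z then (Z ω) ^ 3 else 0) ∂μ| ≤ B * z ^ ((1:ℝ) - δ) := by
      by_cases hδeq : δ = 1
      · obtain ⟨C3, hC3⟩ := hthird hδeq
        refine ⟨|C3|, abs_nonneg _, fun z hz => ?_⟩
        have h1 := hC3 z hz
        have h2 : (1:ℝ) ≤ z ^ ((1:ℝ) - δ) := by
          rw [hδeq]
          simp
        nlinarith [le_abs_self C3, abs_nonneg (∫ ω, (if |Z ω| ≤ z then (Z ω) ^ 3 else 0) ∂μ)]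
      · have hδlt : δ < 1 := lt_of_le_of_ne hδ1 hδeq
        obtain ⟨A3, hA3nn, hA3⟩ := moment_trunc μ Z hZ δ C hδ0 hint2 hC 1 (by push_cast; linarith)
        refine ⟨A3, hA3nn, fun z hz => ?_⟩
        have habs3 : ∀ ω, |if |Z ω| ≤ z then (Z ω) ^ 3 else 0|
            = (if |Z ω| ≤ z then |Z ω| ^ (1 + 2) else 0) := by
          intro ω
          split_ifs with h
          · rw [← abs_pow]
          · simp
        have hI3 : Integrable (fun ω => if |Z ω| ≤ z then (Z ω) ^ 3 else 0) μ := by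
          refine integrable_trunc μ Z hZ (fun x => |x| ≤ z)
            (measurableSet_le habsm measurable_const) (fun x => x ^ 3)
            (measurable_id.pow_const 3) (z ^ 3) (by positivity) ?_
          intro x hx
          rw [abs_pow]
          exact pow_le_pow_left₀ (abs_nonneg x) hx 3
        calc |∫ ω, (if |Z ω| ≤ z then (Z ω) ^ 3 else 0) ∂μ|
            ≤ ∫ ω, |if |Z ω| ≤ z then (Z ω) ^ 3 else 0| ∂μ := by
              rw [← Real.norm_eq_abs]
              simpa only [Real.norm_eq_abs] using
                norm_integral_le_integral_norm (μ := μ)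
                  (fun ω => if |Z ω| ≤ z then (Z ω) ^ 3 else 0)
          _ = ∫ ω, (if |Z ω| ≤ z then |Z ω| ^ (1 + 2) else 0) ∂μ := by
              exact integral_congr_ae (Filter.Eventually.of_forall habs3)
          _ ≤ A3 * z ^ (((1:ℕ):ℝ) - δ) := hA3 z hz
          _ = A3 * z ^ ((1:ℝ) - δ) := by norm_num
    obtain ⟨B, hBnn, hB⟩ := hcub
    set K : ℝ := A4 + B + 4 * |C| with hKdef
    have hKnn : 0 ≤ K := by positivity
    -- the key estimate
    have key : ∀ t : ℝ, t ≠ 0 → |t| ≤ 1 →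
        ‖φ t - 1 + (σ2 / 2 : ℂ) * (t:ℂ) ^ 2‖ ≤ K * (t ^ 2 * |t| ^ δ) := by
      intro t ht0 ht1
      have htpos : 0 < |t| := abs_pos.2 ht0
      set z : ℝ := |t|⁻¹ with hzdef
      have hz1 : 1 ≤ z := (one_le_inv₀ htpos).2 ht1
      have hz0 : 0 < z := lt_of_lt_of_le one_pos hz1
      have htz : |t| * z = 1 := mul_inv_cancel₀ (ne_of_gt htpos)
      set f : Ω → ℂ := fun ω => Complex.exp (Complex.I * t * Z ω) - 1 - Complex.I * t * (Z ω : ℂ)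
        + ((t:ℂ)^2/2) * ((Z ω ^ 2 : ℝ) : ℂ) with hf
      have hfmeas : Measurable f := by
        refine Measurable.add (Measurable.sub (Measurable.sub (hexpmeas t) measurable_const) ?_) ?_
        · exact measurable_const.mul (Complex.measurable_ofReal.comp hZ)
        · exact measurable_const.mul (Complex.measurable_ofReal.comp (hZ.pow_const 2))
      have hIlin : Integrable (fun ω => Complex.I * t * (Z ω:ℂ)) μ := hint1.ofReal.const_mul _
      have hIq : Integrable (fun ω => ((t:ℂ)^2/2) * ((Z ω ^2 : ℝ):ℂ)) μ :=
        hint2.ofReal.const_mul _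
      have hIf : Integrable f μ := (((hφint t).sub (integrable_const 1)).sub hIlin).add hIq
      have hDint : φ t - 1 + (σ2/2:ℂ)*(t:ℂ)^2 = ∫ ω, f ω ∂μ := by
        have h1 : ∫ ω, f ω ∂μ = φ t - 1 - (∫ ω, Complex.I*t*(Z ω:ℂ) ∂μ)
            + ∫ ω, ((t:ℂ)^2/2)*((Z ω^2:ℝ):ℂ) ∂μ := by
          have hIb : Integrable (fun ω => Complex.exp (Complex.I * t * Z ω) - 1) μ :=
            (hφint t).sub (integrable_const 1)
          have hIa : Integrable (fun ω => Complex.exp (Complex.I * t * Z ω) - 1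
              - Complex.I * t * (Z ω : ℂ)) μ := hIb.sub hIlin
          rw [show (∫ ω, f ω ∂μ) = ∫ ω, ((Complex.exp (Complex.I * t * Z ω) - 1
                - Complex.I * t * (Z ω : ℂ)) + ((t:ℂ)^2/2) * ((Z ω ^ 2 : ℝ) : ℂ)) ∂μ from rfl,
              integral_add hIa hIq, integral_sub hIb hIlin,
              integral_sub (hφint t) (integrable_const 1)]
          simp [hφ]
        have h2 : (∫ ω, Complex.I*t*(Z ω:ℂ) ∂μ) = 0 := by
          have e : (∫ ω, ((Z ω : ℝ):ℂ) ∂μ) = (((∫ ω, Z ω ∂μ : ℝ)):ℂ) := integral_ofReal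
          rw [integral_const_mul, e, hmean]
          simp
        have h3 : (∫ ω, ((t:ℂ)^2/2)*((Z ω^2:ℝ):ℂ) ∂μ) = ((t:ℂ)^2/2) * ((σ2:ℝ):ℂ) := by
          have e : (∫ ω, ((Z ω^2 : ℝ):ℂ) ∂μ) = (((∫ ω, Z ω^2 ∂μ : ℝ)):ℂ) := integral_ofReal
          rw [integral_const_mul, e]
        rw [h1, h2, h3]
        ring
      set fle : Ω → ℂ := fun ω => if |Z ω| ≤ z then f ω else 0 with hfle
      set fgt : Ω → ℂ := fun ω => if |Z ω| ≤ z then 0 else f ω with hfgt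
      have hsetm : MeasurableSet {ω | |Z ω| ≤ z} :=
        measurableSet_le (habsm.comp hZ) measurable_const
      have hIfle : Integrable fle μ := by
        refine Integrable.mono' (integrable_const (2 + |t| * z + t^2*z^2/2))
          (Measurable.ite hsetm hfmeas measurable_const).aestronglyMeasurable ?_
        filter_upwards with ω
        by_cases h : |Z ω| ≤ z
        · simp only [hfle, if_pos h]
          have n1 : ‖Complex.exp (Complex.I*t*Z ω)‖ = 1 := hnexp t ω
          have n2 : ‖Complex.I*(t:ℂ)*(Z ω:ℂ)‖ = |t| * |Z ω| := by
            simp [Complex.norm_real]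
          have n3 : ‖((t:ℂ)^2/2)*((Z ω^2:ℝ):ℂ)‖ = t^2/2 * Z ω^2 := by
            rw [norm_mul, norm_div, norm_pow, Complex.norm_real, Complex.norm_real]
            simp [_root_.abs_of_nonneg (sq_nonneg (Z ω)), _root_.sq_abs]
          have c1 : ‖f ω‖ ≤ 1 + 1 + |t| * |Z ω| + t^2/2 * Z ω^2 := by
            have a := norm_add_le (Complex.exp (Complex.I*t*Z ω) - 1 - Complex.I*t*(Z ω:ℂ))
              (((t:ℂ)^2/2)*((Z ω^2:ℝ):ℂ))
            have b := norm_sub_le (Complex.exp (Complex.I*t*Z ω) - 1) (Complex.I*(t:ℂ)*(Z ω:ℂ))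
            have c := norm_sub_le (Complex.exp (Complex.I*t*Z ω)) (1:ℂ)
            rw [n1] at c
            rw [n2] at b
            rw [n3] at a
            simp only [norm_one] at c
            exact le_trans a (by linarith)
          have hZ2 : Z ω^2 ≤ z^2 := by
            rw [← _root_.sq_abs]
            exact pow_le_pow_left₀ (abs_nonneg _) h 2
          have hZ1 : |t| * |Z ω| ≤ |t| * z := mul_le_mul_of_nonneg_left h (abs_nonneg t)
          calc ‖f ω‖ ≤ 1 + 1 + |t| * |Z ω| + t^2/2 * Z ω^2 := c1
            _ ≤ 2 + |t| * z + t^2*z^2/2 := by nlinarith [sq_nonneg t]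
        · simp only [hfle, if_neg h]
          have : (0:ℝ) ≤ 2 + |t| * z + t^2*z^2/2 := by positivity
          simpa using this
      have hIfgt : Integrable fgt μ := by
        have hrel : fgt = fun ω => f ω - fle ω := by
          funext ω
          simp only [hfle, hfgt]
          split_ifs <;> simp
        rw [hrel]
        exact hIf.sub hIfle
      have hsplit : ∫ ω, f ω ∂μ = (∫ ω, fle ω ∂μ) + ∫ ω, fgt ω ∂μ := by
        rw [← integral_add hIfle hIfgt]
        refine integral_congr_ae (Filter.Eventually.of_forall fun ω => ?_)
        simp only [hfle, hfgt]
        split_ifs <;> simp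
      have htailI : Integrable (fun ω => if z < |Z ω| then Z ω^2 else 0) μ := by
        refine Integrable.mono' hint2 (Measurable.ite
          (measurableSet_lt measurable_const (habsm.comp hZ)) (hZ.pow_const 2)
          measurable_const).aestronglyMeasurable ?_
        filter_upwards with ω
        by_cases h : z < |Z ω| <;> simp [h, sq_nonneg]
      have htailb : ‖∫ ω, fgt ω ∂μ‖ ≤ 4*t^2*(C * z^(-δ)) := by
        calc ‖∫ ω, fgt ω ∂μ‖ ≤ ∫ ω, ‖fgt ω‖ ∂μ := norm_integral_le_integral_norm _
          _ ≤ ∫ ω, 4*t^2*(if z < |Z ω| then Z ω^2 else 0) ∂μ := by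
            refine integral_mono hIfgt.norm (htailI.const_mul _) fun ω => ?_
            by_cases h : |Z ω| ≤ z
            · simp [hfgt, if_pos h, not_lt.2 h]
            · push_neg at h
              simp only [hfgt, if_neg (not_le.2 h), if_pos h]
              have hfeq : f ω = Complex.exp (Complex.I * ((t*Z ω:ℝ):ℂ)) - 1
                  - Complex.I*((t*Z ω:ℝ):ℂ) + ((t*Z ω:ℝ):ℂ)^2/2 := by
                simp only [hf]
                push_cast
                ring
              calc ‖f ω‖ ≤ 4*(t*Z ω)^2 := by rw [hfeq]; exact taylor2 (t*Z ω)
                _ = 4*t^2*Z ω^2 := by ring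
          _ = 4*t^2 * ∫ ω, (if z < |Z ω| then Z ω^2 else 0) ∂μ := integral_const_mul _ _
          _ ≤ 4*t^2*(C*z^(-δ)) := mul_le_mul_of_nonneg_left (hC z hz1) (by positivity)
      set cub : Ω → ℝ := fun ω => if |Z ω| ≤ z then Z ω^3 else 0 with hcubdef
      have hIcub : Integrable cub μ :=
        integrable_trunc μ Z hZ (fun x => |x| ≤ z) (measurableSet_le habsm measurable_const)
          (fun x => x^3) (measurable_id.pow_const 3) (z^3) (by positivity)
          (fun x hx => by rw [abs_pow]; exact pow_le_pow_left₀ (abs_nonneg x) hx 3)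
      set ch : Ω → ℂ := fun ω =>
        if |Z ω| ≤ z then (f ω + Complex.I*(t:ℂ)^3/6 * ((Z ω^3:ℝ):ℂ)) else 0 with hchdef
      have hflerel : ∀ ω, fle ω = ch ω - Complex.I*(t:ℂ)^3/6 * ((cub ω:ℝ):ℂ) := by
        intro ω
        simp only [hfle, hchdef, hcubdef]
        split_ifs with h
        · push_cast
          ring
        · simp
      have hIch : Integrable ch μ := by
        have hrel : ch = fun ω => fle ω + Complex.I*(t:ℂ)^3/6 * ((cub ω:ℝ):ℂ) := by
          funext ω
          rw [hflerel ω]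
          ring
        rw [hrel]
        exact hIfle.add (hIcub.ofReal.const_mul _)
      have hmainsplit : (∫ ω, fle ω ∂μ)
          = (∫ ω, ch ω ∂μ) - Complex.I*(t:ℂ)^3/6 * (((∫ ω, cub ω ∂μ) : ℝ):ℂ) := by
        calc (∫ ω, fle ω ∂μ)
            = ∫ ω, (ch ω - Complex.I*(t:ℂ)^3/6 * ((cub ω:ℝ):ℂ)) ∂μ :=
              integral_congr_ae (Filter.Eventually.of_forall hflerel)
          _ = (∫ ω, ch ω ∂μ) - ∫ ω, Complex.I*(t:ℂ)^3/6 * ((cub ω:ℝ):ℂ) ∂μ :=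
              integral_sub hIch (hIcub.ofReal.const_mul _)
          _ = (∫ ω, ch ω ∂μ) - Complex.I*(t:ℂ)^3/6 * (((∫ ω, cub ω ∂μ) : ℝ):ℂ) := by
              have e : (∫ ω, ((cub ω : ℝ):ℂ) ∂μ) = (((∫ ω, cub ω ∂μ : ℝ)):ℂ) := integral_ofReal
              rw [integral_const_mul, e]
      have hI4 : Integrable (fun ω => if |Z ω| ≤ z then |Z ω|^(2+2) else 0) μ :=
        integrable_trunc μ Z hZ (fun x => |x| ≤ z) (measurableSet_le habsm measurable_const)
          (fun x => |x|^(2+2)) (habsm.pow_const _) (z^(2+2)) (by positivity)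
          (fun x hx => by
            rw [abs_of_nonneg (by positivity)]
            exact pow_le_pow_left₀ (abs_nonneg x) hx _)
      have hchb : ‖∫ ω, ch ω ∂μ‖ ≤ t^4 * (A4 * z^((2:ℝ) - δ)) := by
        calc ‖∫ ω, ch ω ∂μ‖ ≤ ∫ ω, ‖ch ω‖ ∂μ := norm_integral_le_integral_norm _
          _ ≤ ∫ ω, t^4 * (if |Z ω| ≤ z then |Z ω|^(2+2) else 0) ∂μ := by
            refine integral_mono hIch.norm (hI4.const_mul _) fun ω => ?_
            by_cases h : |Z ω| ≤ z
            · simp only [hchdef, if_pos h]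
              have hu1 : |t * Z ω| ≤ 1 := by
                rw [abs_mul]
                calc |t| * |Z ω| ≤ |t| * z := mul_le_mul_of_nonneg_left h (abs_nonneg t)
                  _ = 1 := htz
              have hfeq : f ω + Complex.I*(t:ℂ)^3/6 * ((Z ω^3:ℝ):ℂ)
                  = Complex.exp (Complex.I * ((t*Z ω:ℝ):ℂ)) - (1 + Complex.I * ((t*Z ω:ℝ):ℂ)
                    - ((t*Z ω:ℝ):ℂ)^2/2 - Complex.I * ((t*Z ω:ℝ):ℂ)^3/6) := by
                simp only [hf]
                push_cast
                ring
              calc ‖f ω + Complex.I*(t:ℂ)^3/6 * ((Z ω^3:ℝ):ℂ)‖ ≤ (t*Z ω)^4 := by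
                    rw [hfeq]; exact taylor4 (t*Z ω) hu1
                _ = t^4 * (Z ω)^4 := by ring
                _ = t^4 * |Z ω|^(2+2) := by
                    rw [show |Z ω|^(2+2) = (Z ω)^4 from by
                      rw [show (2+2) = 2*2 from rfl, pow_mul, _root_.sq_abs, ← pow_mul]]
            · simp only [hchdef, if_neg h]
              simp [pow_nonneg (abs_nonneg (Z ω))]
          _ = t^4 * ∫ ω, (if |Z ω| ≤ z then |Z ω|^(2+2) else 0) ∂μ := integral_const_mul _ _
          _ ≤ t^4 * (A4 * z^(((2:ℕ):ℝ) - δ)) :=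
              mul_le_mul_of_nonneg_left (hA4 z hz1) (by positivity)
          _ = t^4 * (A4 * z^((2:ℝ) - δ)) := by norm_num
      have hcubb : |∫ ω, cub ω ∂μ| ≤ B * z^((1:ℝ)-δ) := hB z hz1
      -- combine
      have hnc : ‖Complex.I*(t:ℂ)^3/6 * (((∫ ω, cub ω ∂μ) : ℝ):ℂ)‖
          = |t|^3/6 * |∫ ω, cub ω ∂μ| := by
        rw [norm_mul, norm_div, norm_mul, norm_pow, Complex.norm_real]
        simp [Complex.norm_real]
      have hD1 : ‖φ t - 1 + (σ2/2:ℂ)*(t:ℂ)^2‖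
          ≤ t^4*(A4*z^((2:ℝ)-δ)) + |t|^3/6 * (B*z^((1:ℝ)-δ)) + 4*t^2*(C*z^(-δ)) := by
        rw [hDint, hsplit, hmainsplit]
        have step : ‖(∫ ω, ch ω ∂μ) - Complex.I*(t:ℂ)^3/6 * (((∫ ω, cub ω ∂μ) : ℝ):ℂ)
              + ∫ ω, fgt ω ∂μ‖
            ≤ ‖∫ ω, ch ω ∂μ‖ + ‖Complex.I*(t:ℂ)^3/6 * (((∫ ω, cub ω ∂μ) : ℝ):ℂ)‖
              + ‖∫ ω, fgt ω ∂μ‖ := by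
          have a := norm_add_le ((∫ ω, ch ω ∂μ)
            - Complex.I*(t:ℂ)^3/6 * (((∫ ω, cub ω ∂μ) : ℝ):ℂ)) (∫ ω, fgt ω ∂μ)
          have b := norm_sub_le (∫ ω, ch ω ∂μ)
            (Complex.I*(t:ℂ)^3/6 * (((∫ ω, cub ω ∂μ) : ℝ):ℂ))
          linarith
        have mid : ‖Complex.I*(t:ℂ)^3/6 * (((∫ ω, cub ω ∂μ) : ℝ):ℂ)‖
            ≤ |t|^3/6 * (B*z^((1:ℝ)-δ)) := by
          rw [hnc]
          exact mul_le_mul_of_nonneg_left hcubb (by positivity)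
        linarith [hchb, htailb]
      -- rpow conversions
      have hinv : ∀ s : ℝ, z ^ s = |t| ^ (-s) := by
        intro s
        rw [hzdef, show |t|⁻¹ = |t| ^ (-1:ℝ) from (Real.rpow_neg_one _).symm,
          ← Real.rpow_mul (abs_nonneg t), show (-1:ℝ) * s = -s from by ring]
      have habs2 : |t|^((2:ℝ)) = t^2 := by
        rw [show ((2:ℝ)) = ((2:ℕ):ℝ) from by norm_num, Real.rpow_natCast, _root_.sq_abs]
      have e4 : t^4 * z^((2:ℝ)-δ) = t^2 * |t|^δ := by
        have a1 : t^4 = |t|^((4:ℝ)) := by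
          rw [show ((4:ℝ)) = ((4:ℕ):ℝ) from by norm_num, Real.rpow_natCast, ← abs_pow,
            _root_.abs_of_nonneg (by positivity)]
        rw [a1, hinv, ← Real.rpow_add htpos, show (4:ℝ) + -(2 - δ) = 2 + δ from by ring,
          Real.rpow_add htpos, habs2]
      have e3 : |t|^3 * z^((1:ℝ)-δ) = t^2 * |t|^δ := by
        have a1 : |t|^3 = |t|^((3:ℝ)) := by
          rw [show ((3:ℝ)) = ((3:ℕ):ℝ) from by norm_num, Real.rpow_natCast]
        rw [a1, hinv, ← Real.rpow_add htpos, show (3:ℝ) + -(1 - δ) = 2 + δ from by ring,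
          Real.rpow_add htpos, habs2]
      have e2 : t^2 * z^(-δ) = t^2 * |t|^δ := by
        rw [hinv]
        norm_num
      have hX : (0:ℝ) ≤ t^2 * |t|^δ := by positivity
      have hCabs : 4*t^2*(C*z^(-δ)) ≤ 4*|C| * (t^2*|t|^δ) := by
        have h1 : 4*t^2*(C*z^(-δ)) = C * (4 * (t^2 * z^(-δ))) := by ring
        have h2 : 4*|C| * (t^2*|t|^δ) = |C| * (4 * (t^2 * |t|^δ)) := by ring
        rw [h1, h2, ← e2]
        exact mul_le_mul_of_nonneg_right (le_abs_self C) (by positivity)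
      have hA4b : t^4*(A4*z^((2:ℝ)-δ)) = A4 * (t^2*|t|^δ) := by
        rw [← e4]
        ring
      have hBb : |t|^3/6 * (B*z^((1:ℝ)-δ)) ≤ B * (t^2*|t|^δ) := by
        have h1 : |t|^3/6 * (B*z^((1:ℝ)-δ)) = B/6 * (|t|^3 * z^((1:ℝ)-δ)) := by ring
        rw [h1, e3]
        nlinarith
      calc ‖φ t - 1 + (σ2/2:ℂ)*(t:ℂ)^2‖
          ≤ t^4*(A4*z^((2:ℝ)-δ)) + |t|^3/6 * (B*z^((1:ℝ)-δ)) + 4*t^2*(C*z^(-δ)) := hD1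
        _ ≤ A4 * (t^2*|t|^δ) + B * (t^2*|t|^δ) + 4*|C| * (t^2*|t|^δ) := by
            linarith [hA4b, hBb, hCabs]
        _ = K * (t^2*|t|^δ) := by rw [hKdef]; ring
    -- define g
    set g : ℝ → ℂ := fun t =>
      if t = 0 then 0 else (1 - φ t) / ((σ2 / 2 : ℂ) * (t:ℂ)^2) - 1 with hg
    have hident : ∀ t : ℝ, φ t = 1 - (σ2 / 2 : ℂ) * (t:ℂ)^2 * (1 + g t) := by
      intro t
      by_cases ht : t = 0
      · subst ht
        rw [hφ0]
        simp [hg]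
      · have hb : ((σ2 : ℂ) / 2) * (t:ℂ)^2 ≠ 0 := by
          apply mul_ne_zero
          · simp only [ne_eq, div_eq_zero_iff, Complex.ofReal_eq_zero]
            push_neg
            exact ⟨ne_of_gt hσ2pos, by norm_num⟩
          · exact pow_ne_zero _ (Complex.ofReal_ne_zero.2 ht)
        simp only [hg, if_neg ht]
        field_simp [Complex.ofReal_ne_zero.2 (ne_of_gt hσ2pos), Complex.ofReal_ne_zero.2 ht]
        ring
    have hnormg : ∀ t : ℝ, (t:ℝ) ^ 2 * ‖g t‖ = (2 / σ2) * ‖φ t - 1 + (σ2 / 2 : ℂ) * (t:ℂ)^2‖ := by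
      intro t
      by_cases ht : t = 0
      · subst ht
        rw [hφ0]
        simp [hg]
      · have hb : ((σ2 : ℂ) / 2) * (t:ℂ)^2 ≠ 0 := by
          apply mul_ne_zero
          · simp only [ne_eq, div_eq_zero_iff, Complex.ofReal_eq_zero]
            push_neg
            exact ⟨ne_of_gt hσ2pos, by norm_num⟩
          · exact pow_ne_zero _ (Complex.ofReal_ne_zero.2 ht)
        have e1 : g t = -(φ t - 1 + (σ2 / 2 : ℂ) * (t:ℂ)^2) / ((σ2 / 2 : ℂ) * (t:ℂ)^2) := by
          simp only [hg, if_neg ht]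
          field_simp [Complex.ofReal_ne_zero.2 (ne_of_gt hσ2pos), Complex.ofReal_ne_zero.2 ht]
          ring
        have e2 : ‖((σ2 : ℂ) / 2) * (t:ℂ)^2‖ = (σ2 / 2) * t^2 := by
          rw [norm_mul, norm_div, norm_pow, Complex.norm_real]
          simp [_root_.abs_of_nonneg hσ2nn, _root_.sq_abs]
        rw [e1, norm_div, norm_neg, e2]
        field_simp
    refine ⟨σ2, hσ2nn, g, fun t => hident t, 4 * K / σ2 + 1, by positivity, 1, one_pos, ?_⟩
    intro x hx0 hx1
    have hDcont : Continuous (fun t : ℝ => (2/σ2) * ‖φ t - 1 + (σ2/2:ℂ)*(t:ℂ)^2‖) := by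
      refine Continuous.mul continuous_const (Continuous.norm ?_)
      exact (hφcont.sub continuous_const).add
        (continuous_const.mul ((Complex.continuous_ofReal).pow 2))
    have hxnn : (0:ℝ) ≤ x ^ (3 + δ) := Real.rpow_nonneg hx0.le _
    have hbound : ∀ t ∈ Set.Icc (-x) x,
        (2/σ2) * ‖φ t - 1 + (σ2/2:ℂ)*(t:ℂ)^2‖ ≤ (2/σ2) * (K * (x^2 * x^δ)) := by
      intro t ht
      have habsx : |t| ≤ x := abs_le.2 ⟨ht.1, ht.2⟩
      refine mul_le_mul_of_nonneg_left ?_ (by positivity)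
      by_cases ht0 : t = 0
      · subst ht0
        rw [hφ0]
        simp only [Complex.ofReal_zero]
        norm_num
        positivity
      · calc ‖φ t - 1 + (σ2/2:ℂ)*(t:ℂ)^2‖ ≤ K * (t^2 * |t|^δ) :=
              key t ht0 (le_trans habsx hx1)
          _ ≤ K * (x^2 * x^δ) := by
              refine mul_le_mul_of_nonneg_left ?_ hKnn
              have h1 : t^2 ≤ x^2 := by nlinarith [_root_.sq_abs t, abs_nonneg t]
              have h2 : |t|^δ ≤ x^δ := Real.rpow_le_rpow (abs_nonneg t) habsx hδ0.le
              have h3 : (0:ℝ) ≤ |t|^δ := Real.rpow_nonneg (abs_nonneg t) _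
              nlinarith [sq_nonneg t]
    have heqint : (∫ t in (-x)..x, t ^ 2 * ‖g t‖)
        = ∫ t in (-x)..x, (2/σ2) * ‖φ t - 1 + (σ2/2:ℂ)*(t:ℂ)^2‖ := by
      refine intervalIntegral.integral_congr fun t _ => ?_
      exact hnormg t
    rw [heqint]
    have hxx : -x ≤ x := by linarith
    calc (∫ t in (-x)..x, (2/σ2) * ‖φ t - 1 + (σ2/2:ℂ)*(t:ℂ)^2‖)
        ≤ ∫ _ in (-x)..x, (2/σ2) * (K * (x^2 * x^δ)) :=
          intervalIntegral.integral_mono_on hxx (hDcont.intervalIntegrable _ _)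
            intervalIntegrable_const hbound
      _ = (x - (-x)) * ((2/σ2) * (K * (x^2 * x^δ))) := by
          rw [intervalIntegral.integral_const]
          simp
      _ = (4*K/σ2) * (x^2 * x^δ * x) := by field_simp; ring
      _ = (4*K/σ2) * x^(3+δ) := by
          rw [show x^2 * x^δ * x = x^(3+δ) from by
            rw [Real.rpow_add hx0, show ((3:ℝ)) = ((3:ℕ):ℝ) from by norm_num,
              Real.rpow_natCast]
            ring]
      _ ≤ (4*K/σ2 + 1) * x^(3+δ) := by nlinarith [div_nonneg (by positivity : (0:ℝ) ≤ 4*K) hσ2pos.le]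
end

section
/- Let 0 < α < 1/2 and consider T : [0,1] → [0,1], T(x) = x(1+2^α x^α) for 0 ≤ x ≤ 1/2 and T(x) = 2x-1 for 1/2 < x ≤ 1. Define x_0 = 1 and x_{n+1} ∈ [0,1/2] the preimage of x_n under T in [0,1/2]. Then x_n → 0 and there is a constant D > 0 with x_n ~ D·n^{-1/α}; in particular x_n = O(n^{-1/α}) and n^{-1/α} = O(x_n). -/
open Filter Topology

/-- The Liverani–Saussol–Vaienti map. -/
noncomputable def lsvMap (α : ℝ) (x : ℝ) : ℝ :=
  if x ≤ 1 / 2 then x * (1 + (2 : ℝ) ^ α * x ^ α) else 2 * x - 1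

/-- Asymptotics of the backward orbit of `1` along the left branch of the
intermittent map: `x_n ~ D n^{-1/α}`. -/
theorem stmt_18 (α : ℝ) (hα0 : 0 < α) (hα1 : α < 1 / 2)
    (x : ℕ → ℝ) (hx0 : x 0 = 1)
    (hx : ∀ n : ℕ, x (n + 1) ∈ Set.Icc (0 : ℝ) (1 / 2) ∧ lsvMap α (x (n + 1)) = x n) :
    Tendsto x atTop (𝓝 0)
    ∧ ∃ D > 0, Tendsto (fun n : ℕ => x n * (n : ℝ) ^ (1 / α)) atTop (𝓝 D) := by
  have hxe : ∀ n : ℕ, x (n + 1) * (1 + (2:ℝ) ^ α * x (n + 1) ^ α) = x n := by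
    intro n
    have h := (hx n).2
    rwa [lsvMap, if_pos (hx n).1.2] at h
  have hnn : ∀ n, 0 ≤ x n := by
    intro n
    cases n with
    | zero => rw [hx0]; norm_num
    | succ n => exact (hx n).1.1
  have h2pos : (0:ℝ) < (2:ℝ) ^ α := Real.rpow_pos_of_pos two_pos α
  have hpos : ∀ n, 0 < x n := by
    intro n
    induction n with
    | zero => rw [hx0]; norm_num
    | succ n ih =>
      rcases lt_or_eq_of_le (hnn (n+1)) with h | h
      · exact h
      · exfalso
        have h2 := hxe n
        rw [← h] at h2
        simp at h2
        linarith
  have hmono : ∀ n, x (n+1) ≤ x n := by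
    intro n
    have h := hxe n
    have hc : 0 ≤ (2:ℝ)^α * x (n+1) ^ α :=
      mul_nonneg h2pos.le (Real.rpow_nonneg (hnn _) _)
    nlinarith [hpos (n+1)]
  have hanti : Antitone x := antitone_nat_of_succ_le hmono
  have hbdd : BddBelow (Set.range x) := ⟨0, fun z ⟨n, hn⟩ => hn ▸ hnn n⟩
  set L : ℝ := ⨅ n, x n with hLdef
  have hL : Tendsto x atTop (𝓝 L) := tendsto_atTop_ciInf hanti hbdd
  have hL0 : 0 ≤ L := le_ciInf hnn
  have hL' : Tendsto (fun n => x (n+1)) atTop (𝓝 L) := hL.comp (tendsto_add_atTop_nat 1)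
  have hxa' : Tendsto (fun n => x (n+1) ^ α) atTop (𝓝 (L ^ α)) :=
    ((Real.continuousAt_rpow_const L α (Or.inr hα0.le)).tendsto).comp hL'
  have hLeq : L * (1 + (2:ℝ)^α * L ^ α) = L := by
    have h1 : Tendsto (fun n => x (n+1) * (1 + (2:ℝ)^α * x (n+1) ^ α)) atTop
        (𝓝 (L * (1 + (2:ℝ)^α * L ^ α))) :=
      hL'.mul (tendsto_const_nhds.add (hxa'.const_mul _))
    have h2 : Tendsto (fun n => x (n+1) * (1 + (2:ℝ)^α * x (n+1) ^ α)) atTop (𝓝 L) := by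
      refine hL.congr fun n => (hxe n).symm
    exact tendsto_nhds_unique h1 h2
  have hLzero : L = 0 := by
    by_contra h
    have hLpos : 0 < L := lt_of_le_of_ne hL0 (Ne.symm h)
    have : 0 < L * ((2:ℝ)^α * L^α) :=
      mul_pos hLpos (mul_pos h2pos (Real.rpow_pos_of_pos hLpos α))
    nlinarith
  rw [hLzero] at hL hL'
  refine ⟨hL, ?_⟩
  -- second part
  set y : ℕ → ℝ := fun n => x n ^ (-α) with hy_def
  set t : ℕ → ℝ := fun n => (2:ℝ)^α * x (n+1) ^ α with ht_def
  have ht_pos : ∀ n, 0 < t n := fun n =>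
    mul_pos h2pos (Real.rpow_pos_of_pos (hpos (n+1)) α)
  have hy_pos : ∀ n, 0 < y n := fun n => Real.rpow_pos_of_pos (hpos n) _
  have hyrec : ∀ n, y n = y (n+1) * (1 + t n) ^ (-α) := by
    intro n
    have h1 : x n = x (n+1) * (1 + t n) := (hxe n).symm
    have h2 : (0:ℝ) ≤ 1 + t n := by linarith [ht_pos n]
    simp only [hy_def]
    rw [h1]
    rw [Real.mul_rpow (hnn _) h2]
  have hd_eq : ∀ n, y (n+1) - y n = (2:ℝ)^α * ((1 - (1 + t n) ^ (-α)) / t n) := by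
    intro n
    rw [hyrec n]
    have hy1 : y (n+1) = ((x (n+1)) ^ α)⁻¹ := Real.rpow_neg (hnn _) α
    rw [hy1]
    have ha : (0:ℝ) < x (n+1) ^ α := Real.rpow_pos_of_pos (hpos _) α
    have htn : t n = (2:ℝ)^α * x (n+1) ^ α := rfl
    rw [htn]
    field_simp
  -- derivative fact
  have hderiv : HasDerivAt (fun u : ℝ => -((1+u) ^ (-α))) α 0 := by
    have h1 : HasDerivAt (fun u : ℝ => 1 + u) 1 0 := (hasDerivAt_id 0).const_add 1
    have h2 : HasDerivAt (fun v : ℝ => v ^ (-α)) (-α * (1:ℝ) ^ (-α - 1)) ((fun u:ℝ => 1+u) 0) := by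
      simpa using Real.hasDerivAt_rpow_const (p := -α) (Or.inl one_ne_zero)
    have h3 := (h2.comp 0 h1).neg
    refine h3.congr_deriv ?_
    simp [Real.one_rpow]
  have hslope := hasDerivAt_iff_tendsto_slope.mp hderiv
  have heq : ∀ u : ℝ, slope (fun u : ℝ => -((1+u) ^ (-α))) 0 u = (1 - (1+u)^(-α)) / u := by
    intro u
    rw [slope_def_field]
    simp [Real.one_rpow]
    ring
  have hg : Tendsto (fun u : ℝ => (1 - (1+u)^(-α)) / u) (𝓝[>] (0:ℝ)) (𝓝 α) :=
    ((hslope.mono_left (nhdsWithin_mono 0 (fun u hu => hu.ne'))).congr heq)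
  -- t n → 0 within (0,∞)
  have hxa : Tendsto (fun n => x (n+1) ^ α) atTop (𝓝 0) := by
    have hc := (Real.continuousAt_rpow_const 0 α (Or.inr hα0.le)).tendsto
    rw [Real.zero_rpow hα0.ne'] at hc
    exact hc.comp hL'
  have ht0 : Tendsto t atTop (𝓝 0) := by
    have := hxa.const_mul ((2:ℝ)^α)
    simpa using this
  have htw : Tendsto t atTop (𝓝[>] (0:ℝ)) :=
    tendsto_nhdsWithin_of_tendsto_nhds_of_eventually_within _ ht0
      (Eventually.of_forall fun n => ht_pos n)
  have hd : Tendsto (fun n => y (n+1) - y n) atTop (𝓝 ((2:ℝ)^α * α)) := by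
    have := ((hg.comp htw).const_mul ((2:ℝ)^α))
    exact this.congr fun n => (hd_eq n).symm
  set M : ℝ := (2:ℝ)^α * α with hMdef
  have hMpos : 0 < M := mul_pos h2pos hα0
  -- Cesaro
  have hces := hd.cesaro
  have hsum : ∀ n, ∑ i ∈ Finset.range n, (y (i+1) - y i) = y n - y 0 := fun n =>
    Finset.sum_range_sub y n
  have h1 : Tendsto (fun n : ℕ => (n:ℝ)⁻¹ * (y n - y 0)) atTop (𝓝 M) := by
    refine hces.congr fun n => ?_
    rw [hsum n]
  have h2 : Tendsto (fun n : ℕ => (n:ℝ)⁻¹ * y 0) atTop (𝓝 0) := by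
    simpa using tendsto_inv_atTop_nhds_zero_nat.mul_const (y 0)
  have h3 := h1.add h2
  rw [add_zero] at h3
  have hylim : Tendsto (fun n : ℕ => y n / (n:ℝ)) atTop (𝓝 M) := by
    refine h3.congr fun n => ?_
    rw [div_eq_inv_mul]; ring
  have hfin : Tendsto (fun n : ℕ => (y n / (n:ℝ)) ^ (-(1/α))) atTop (𝓝 (M ^ (-(1/α)))) :=
    hylim.rpow_const (Or.inl hMpos.ne')
  have hfun : ∀ n : ℕ, (y n / (n:ℝ)) ^ (-(1/α)) = x n * (n:ℝ) ^ (1/α) := by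
    intro n
    have hy1 : y n ^ (-(1/α)) = x n := by
      simp only [hy_def]
      rw [← Real.rpow_mul (hnn n)]
      rw [show (-α) * (-(1/α)) = 1 by field_simp, Real.rpow_one]
    rw [Real.div_rpow (hy_pos n).le (Nat.cast_nonneg n), hy1,
      Real.rpow_neg (Nat.cast_nonneg n), div_eq_mul_inv, inv_inv]
  exact ⟨M ^ (-(1/α)), Real.rpow_pos_of_pos hMpos _, hfin.congr hfun⟩
end
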